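/- Let A ∈ ℂ^{m×p} and B ∈ ℂ^{m×q} have unit-norm columns, coherences μ(A), μ(B), and mutual coherence μ̄ > 0. Suppose A p = B q with (p,q) ≠ 0, p is ε_P-concentrated in 1-norm on P ⊆ {1,…,p}, and q is ε_Q-concentrated in 1-norm on Q ⊆ {1,…,q}. Then |P|·|Q| ≥ [ (1+μ(A))(1−ε_P) − μ(A)|P| ]₊ · [ (1+μ(B))(1−ε_Q) − μ(B)|Q| ]₊ / μ̄². -/

import Mathlib

/-! The Gram matrix `AᴴA` has unit diagonal and off-diagonal entries of norm at most `μ(A)`, so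
`|(AᴴA p)_i| ≥ (1 + μ(A)) |p_i| - μ(A) ‖p‖₁`, while `AᴴA p = AᴴB q` bounds the same coordinate by
`μ̄ ‖q‖₁`. Summing over `i ∈ P` and using the concentration of `p` gives
`[(1 + μ(A))(1 - ε_P) - μ(A)|P|] ‖p‖₁ ≤ μ̄ |P| ‖q‖₁`, and symmetrically for `q`. Both norms are
positive since `(p, q) ≠ 0`, so multiplying the two bounds gives the claim. -/

open scoped BigOperators Matrix

noncomputable def vnorm2 {m : ℕ} (x : Fin m → ℂ) : ℝ :=
  Real.sqrt (∑ i, ‖x i‖ ^ 2)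

noncomputable def vnorm1 {m : ℕ} (x : Fin m → ℂ) : ℝ :=
  ∑ i, ‖x i‖

noncomputable def opnorm2 {m n : ℕ} (A : Matrix (Fin m) (Fin n) ℂ) : ℝ :=
  sSup {c | ∃ x : Fin n → ℂ, vnorm2 x = 1 ∧ c = vnorm2 (A.mulVec x)}

noncomputable def opnorm1 {m n : ℕ} (A : Matrix (Fin m) (Fin n) ℂ) : ℝ :=
  sSup {c | ∃ x : Fin n → ℂ, vnorm1 x = 1 ∧ c = vnorm1 (A.mulVec x)}

noncomputable def frobNorm {m n : ℕ} (A : Matrix (Fin m) (Fin n) ℂ) : ℝ :=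
  Real.sqrt (∑ i, ∑ j, ‖A i j‖ ^ 2)

def Dmat {m : ℕ} (P : Finset (Fin m)) : Matrix (Fin m) (Fin m) ℂ :=
  Matrix.diagonal (fun i => if i ∈ P then 1 else 0)

noncomputable def dft (m : ℕ) : Matrix (Fin m) (Fin m) ℂ :=
  fun k l => (1 / Real.sqrt m : ℝ) *
    Complex.exp (-2 * Real.pi * Complex.I * (k.1 + 1) * (l.1 + 1) / m)

namespace Matrix

theorem norm_mulVec_apply_le_mul_sum_norm {m n 𝕜 : Type*} [Fintype n] [NormedRing 𝕜]
    (M : Matrix m n 𝕜) (v : n → 𝕜) (i : m) {c : ℝ} (hM : ∀ j, ‖M i j‖ ≤ c) :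
    ‖(M *ᵥ v) i‖ ≤ c * ∑ j, ‖v j‖ := by
  rw [Finset.mul_sum]
  refine norm_sum_le_of_le _ fun j _ => ?_
  exact (norm_mul_le _ _).trans (mul_le_mul_of_nonneg_right (hM j) (norm_nonneg _))

theorem mul_norm_sub_le_norm_mulVec_apply {n 𝕜 : Type*} [Fintype n] [DecidableEq n]
    [NormedRing 𝕜] (G : Matrix n n 𝕜) (v : n → 𝕜) (i : n) {μ : ℝ} (hdiag : G i i = 1)
    (hoff : ∀ j, j ≠ i → ‖G i j‖ ≤ μ) :
    (1 + μ) * ‖v i‖ - μ * ∑ j, ‖v j‖ ≤ ‖(G *ᵥ v) i‖ := by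
  set rest := ∑ j ∈ Finset.univ.erase i, G i j * v j
  have hsplit : (G *ᵥ v) i = v i + rest := by
    rw [mulVec, dotProduct, ← Finset.add_sum_erase _ _ (Finset.mem_univ i), hdiag, one_mul]
  have hrest : ‖rest‖ ≤ μ * (∑ j, ‖v j‖ - ‖v i‖) := by
    rw [← Finset.sum_erase_eq_sub (Finset.mem_univ i), Finset.mul_sum]
    refine norm_sum_le_of_le _ fun j hj => (norm_mul_le _ _).trans ?_
    exact mul_le_mul_of_nonneg_right (hoff j (Finset.ne_of_mem_erase hj)) (norm_nonneg _)
  rw [hsplit]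
  have htri : ‖v i‖ ≤ ‖v i + rest‖ + ‖rest‖ := by
    simpa using norm_sub_le (v i + rest) rest
  linarith

theorem conjTranspose_mul_self_apply_self {m n : Type*} [Fintype m] (A : Matrix m n ℂ) (j : n) :
    (Aᴴ * A) j j = ((∑ k, ‖A k j‖ ^ 2 : ℝ) : ℂ) := by
  simp only [mul_apply, conjTranspose_apply, Complex.star_def, Complex.conj_mul',
    Complex.ofReal_sum, Complex.ofReal_pow]

theorem norm_conjTranspose_mul_apply {m n l : Type*} [Fintype m] (A : Matrix m n ℂ)
    (B : Matrix m l ℂ) (i : l) (j : n) : ‖(Bᴴ * A) i j‖ = ‖(Aᴴ * B) j i‖ := by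
  rw [← conjTranspose_conjTranspose (Bᴴ * A), conjTranspose_mul, conjTranspose_conjTranspose,
    conjTranspose_apply, norm_star]

end Matrix

theorem vnorm1_pos {n : ℕ} {x : Fin n → ℂ} (hx : x ≠ 0) : 0 < vnorm1 x := by
  obtain ⟨i, hi⟩ := Function.ne_iff.mp hx
  exact Finset.sum_pos' (fun j _ => norm_nonneg (x j)) ⟨i, Finset.mem_univ i, norm_pos_iff.mpr hi⟩

theorem vnorm1_sub_Dmat_mulVec {n : ℕ} (x : Fin n → ℂ) (P : Finset (Fin n)) :
    vnorm1 (x - (Dmat P) *ᵥ x) = vnorm1 x - ∑ i ∈ P, ‖x i‖ := by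
  have hcoord : ∀ i, ‖(x - (Dmat P) *ᵥ x) i‖ = ‖x i‖ - if i ∈ P then ‖x i‖ else 0 := by
    intro i
    by_cases hi : i ∈ P <;> simp [Dmat, Matrix.mulVec_diagonal, hi]
  simp only [vnorm1, hcoord, Finset.sum_sub_distrib, Finset.sum_ite_mem, Finset.univ_inter]

theorem max_mul_max_le_of_cross_bounds {a b x y s t : ℝ}
    (hxy : 0 < x ∨ 0 < y) (hs : 0 ≤ s) (ht : 0 ≤ t) (ha : a * x ≤ s * y) (hb : b * y ≤ t * x) :
    max a 0 * max b 0 ≤ s * t := by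
  rcases le_or_gt a 0 with ha0 | ha0
  · simpa [max_eq_right ha0] using mul_nonneg hs ht
  rcases le_or_gt b 0 with hb0 | hb0
  · simpa [max_eq_right hb0] using mul_nonneg hs ht
  rw [max_eq_left ha0.le, max_eq_left hb0.le]
  obtain ⟨hx0, hy0⟩ : 0 < x ∧ 0 < y := by
    rcases hxy with hx0 | hy0
    · exact ⟨hx0, pos_of_mul_pos_right ((mul_pos ha0 hx0).trans_le ha) hs⟩
    · exact ⟨pos_of_mul_pos_right ((mul_pos hb0 hy0).trans_le hb) ht, hy0⟩
  have hprod : a * b * (x * y) ≤ s * t * (x * y) := by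
    nlinarith [mul_le_mul ha hb (by positivity) (by positivity)]
  exact le_of_mul_le_mul_right hprod (mul_pos hx0 hy0)

open Matrix in
theorem mul_vnorm1_le_of_mulVec_eq {m p q : ℕ} {A : Matrix (Fin m) (Fin p) ℂ}
    {B : Matrix (Fin m) (Fin q) ℂ} (hcol : ∀ j, vnorm2 (fun i => A i j) = 1) {μ μbar ε : ℝ}
    (hμ0 : 0 ≤ 1 + μ) (hμ : ∀ i j, i ≠ j → ‖(Aᴴ * A) i j‖ ≤ μ)
    (hμbar : ∀ i j, ‖(Aᴴ * B) i j‖ ≤ μbar) {pv : Fin p → ℂ} {qv : Fin q → ℂ}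
    (h : A *ᵥ pv = B *ᵥ qv) {P : Finset (Fin p)}
    (hpc : vnorm1 (pv - (Dmat P) *ᵥ pv) ≤ ε * vnorm1 pv) :
    ((1 + μ) * (1 - ε) - μ * P.card) * vnorm1 pv ≤ μbar * P.card * vnorm1 qv := by
  have hdiag : ∀ j, (Aᴴ * A) j j = 1 := fun j => by
    rw [conjTranspose_mul_self_apply_self, Real.sqrt_eq_one.mp (hcol j), Complex.ofReal_one]
  have hcoord : ∀ i, (1 + μ) * ‖pv i‖ - μ * vnorm1 pv ≤ μbar * vnorm1 qv := fun i =>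
    calc (1 + μ) * ‖pv i‖ - μ * vnorm1 pv ≤ ‖((Aᴴ * A) *ᵥ pv) i‖ :=
          mul_norm_sub_le_norm_mulVec_apply _ _ _ (hdiag i) fun j hj => hμ i j hj.symm
      _ = ‖((Aᴴ * B) *ᵥ qv) i‖ := by rw [← mulVec_mulVec, h, mulVec_mulVec]
      _ ≤ μbar * vnorm1 qv := norm_mulVec_apply_le_mul_sum_norm _ _ _ (hμbar i)
  have hsum := Finset.sum_le_sum fun i (_ : i ∈ P) => hcoord i
  simp only [Finset.sum_sub_distrib, ← Finset.mul_sum, Finset.sum_const, nsmul_eq_mul] at hsum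
  have hconc : (1 - ε) * vnorm1 pv ≤ ∑ i ∈ P, ‖pv i‖ := by
    rw [vnorm1_sub_Dmat_mulVec] at hpc
    linarith
  nlinarith [mul_le_mul_of_nonneg_left hconc hμ0]

theorem stmt15_general {m p q : ℕ} (A : Matrix (Fin m) (Fin p) ℂ) (B : Matrix (Fin m) (Fin q) ℂ)
    (hcolA : ∀ j, vnorm2 (fun i => A i j) = 1) (hcolB : ∀ j, vnorm2 (fun i => B i j) = 1)
    (μA μB μbar : ℝ)
    (hμA : IsGreatest {x | ∃ i j, i ≠ j ∧ x = ‖(Aᴴ * A) i j‖} μA)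
    (hμB : IsGreatest {x | ∃ i j, i ≠ j ∧ x = ‖(Bᴴ * B) i j‖} μB)
    (hμbar : IsGreatest {x | ∃ i j, x = ‖(Aᴴ * B) i j‖} μbar)
    (pv : Fin p → ℂ) (qv : Fin q → ℂ) (h : A.mulVec pv = B.mulVec qv)
    (hne : pv ≠ 0 ∨ qv ≠ 0)
    (P : Finset (Fin p)) (Q : Finset (Fin q))
    (εP εQ : ℝ)
    (hpc : vnorm1 (pv - (Dmat P).mulVec pv) ≤ εP * vnorm1 pv)
    (hqc : vnorm1 (qv - (Dmat Q).mulVec qv) ≤ εQ * vnorm1 qv) :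
    ((P.card : ℝ) * Q.card)
      ≥ max ((1 + μA) * (1 - εP) - μA * P.card) 0 *
          max ((1 + μB) * (1 - εQ) - μB * Q.card) 0 / μbar ^ 2 := by
  have hμA0 : 0 ≤ μA := by obtain ⟨i, j, -, rfl⟩ := hμA.1; exact norm_nonneg _
  have hμB0 : 0 ≤ μB := by obtain ⟨i, j, -, rfl⟩ := hμB.1; exact norm_nonneg _
  have hμbar0 : 0 ≤ μbar := by obtain ⟨i, j, rfl⟩ := hμbar.1; exact norm_nonneg _
  have boundP := mul_vnorm1_le_of_mulVec_eq hcolA (by linarith)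
    (fun i j hij => hμA.2 ⟨i, j, hij, rfl⟩) (fun i j => hμbar.2 ⟨i, j, rfl⟩) h hpc
  have boundQ := mul_vnorm1_le_of_mulVec_eq hcolB (by linarith)
    (fun i j hij => hμB.2 ⟨i, j, hij, rfl⟩)
    (fun i j => (Matrix.norm_conjTranspose_mul_apply A B i j).trans_le (hμbar.2 ⟨j, i, rfl⟩))
    h.symm hqc
  refine div_le_of_le_mul₀ (by positivity) (by positivity) ?_
  calc _ ≤ (μbar * P.card) * (μbar * Q.card) :=
        max_mul_max_le_of_cross_bounds (hne.imp vnorm1_pos vnorm1_pos) (by positivity)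
          (by positivity) boundP boundQ
    _ = P.card * Q.card * μbar ^ 2 := by ring

theorem stmt15 {m p q : ℕ} (A : Matrix (Fin m) (Fin p) ℂ) (B : Matrix (Fin m) (Fin q) ℂ)
    (hcolA : ∀ j, vnorm2 (fun i => A i j) = 1) (hcolB : ∀ j, vnorm2 (fun i => B i j) = 1)
    (μA μB μbar : ℝ)
    (hμA : IsGreatest {x | ∃ i j, i ≠ j ∧ x = ‖(Aᴴ * A) i j‖} μA)
    (hμB : IsGreatest {x | ∃ i j, i ≠ j ∧ x = ‖(Bᴴ * B) i j‖} μB)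
    (hμbar : IsGreatest {x | ∃ i j, x = ‖(Aᴴ * B) i j‖} μbar)
    (hμbarpos : 0 < μbar)
    (pv : Fin p → ℂ) (qv : Fin q → ℂ) (h : A.mulVec pv = B.mulVec qv)
    (hne : pv ≠ 0 ∨ qv ≠ 0)
    (P : Finset (Fin p)) (Q : Finset (Fin q))
    (εP εQ : ℝ) (hεP : εP ∈ Set.Icc (0 : ℝ) 1) (hεQ : εQ ∈ Set.Icc (0 : ℝ) 1)
    (hpc : vnorm1 (pv - (Dmat P).mulVec pv) ≤ εP * vnorm1 pv)
    (hqc : vnorm1 (qv - (Dmat Q).mulVec qv) ≤ εQ * vnorm1 qv) :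
    ((P.card : ℝ) * Q.card)
      ≥ max ((1 + μA) * (1 - εP) - μA * P.card) 0 *
          max ((1 + μB) * (1 - εQ) - μB * Q.card) 0 / μbar ^ 2 :=
  stmt15_general A B hcolA hcolB μA μB μbar hμA hμB hμbar pv qv h hne P Q εP εQ hpc hqc
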